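/- Let d=1, p>1, x₀∈ℝ and 0<R<1, and let φ∈C⁴_b((x₀−R, x₀+R)) satisfy φ'≠0 on [x₀−R, x₀+R]. Set R₀ := (inf_{(x₀−R,x₀+R)}|φ'|)/‖φ''‖_{L^∞((x₀−R,x₀+R))}. Then there is a constant C>0, depending only on p, ‖φ‖_{C⁴_b((x₀−R,x₀+R))} and inf_{(x₀−R,x₀+R)}|φ'|, such that for every 0<r<min{R₀, R/2}, every x with |x−x₀|<R/2 and each i∈{1,2}, one has |M^p_{r,i}[φ](x) − (p−1)|φ'(x)|^{p−2}φ''(x)| ≤ C r². -/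

import Mathlib

open MeasureTheory Metric Filter
open scoped Topology

noncomputable section

/-- `J_p(ξ) = |ξ|^{p-2} ξ`. -/
def Jp (p ξ : ℝ) : ℝ := |ξ| ^ (p - 2) * ξ

/-- `φ ∈ C⁴_b(s)` (for `φ : ℝ → ℝ`) with `‖φ‖_{C⁴_b(s)} ≤ M`. -/
def C4bOn1 (φ : ℝ → ℝ) (s : Set ℝ) (M : ℝ) : Prop :=
  ContDiffOn ℝ 4 φ s ∧ ∀ k : ℕ, k ≤ 4 → ∀ y ∈ s, |iteratedDerivWithin k φ s y| ≤ M

/-- `M^p_{r,1}[φ](x)` in dimension one. -/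
def Mr1D (p r : ℝ) (φ : ℝ → ℝ) (x : ℝ) : ℝ :=
  (Jp p (φ (x + r) - φ x) + Jp p (φ (x - r) - φ x)) / r ^ p

/-- `M^p_{r,2}[φ](x)` in dimension one (`κ_{p,1} = 2`). -/
def Mr2D (p r : ℝ) (φ : ℝ → ℝ) (x : ℝ) : ℝ :=
  ((p + 1) * 2 / r ^ p) * ((1 / (2 * r)) * ∫ y in Set.Ioo (-r) r, Jp p (φ (x + y) - φ x))

/-- `inf_{y ∈ s} |φ'(y)|`. -/
def derivInfOn (φ : ℝ → ℝ) (s : Set ℝ) : ℝ := sInf ((fun y => |deriv φ y|) '' s)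

/-- `‖φ''‖_{L^∞(s)}`. -/
def deriv2SupOn (φ : ℝ → ℝ) (s : Set ℝ) : ℝ := sSup ((fun y => |deriv (deriv φ) y|) '' s)

lemma jp_odd (p t : ℝ) : Jp p (-t) = - Jp p t := by
  simp [Jp, mul_comm]

lemma jp_pos {p t : ℝ} (ht : 0 < t) : Jp p t = t ^ (p - 1) := by
  rw [Jp, abs_of_pos ht, show p - 1 = p - 2 + 1 by ring, Real.rpow_add_one ht.ne']

lemma hasDerivAt_rpow'' {σ : ℝ} (q q' : ℝ) (hq : q - 1 = q') (hσ : 0 < σ) :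
    HasDerivAt (fun t : ℝ => t ^ q) (q * σ ^ q') σ := by
  rw [← hq]; exact Real.hasDerivAt_rpow_const (Or.inl hσ.ne')

lemma hasDerivAt_jp {p : ℝ} {σ : ℝ} (hσ : 0 < σ) :
    HasDerivAt (Jp p) ((p - 1) * σ ^ (p - 2)) σ := by
  have h : HasDerivAt (fun t : ℝ => t ^ (p - 1)) ((p - 1) * σ ^ (p - 2)) σ :=
    hasDerivAt_rpow'' (p - 1) (p - 2) (by ring) hσ
  refine h.congr_of_eventuallyEq ?_
  filter_upwards [isOpen_Ioi.mem_nhds hσ] with t ht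
  exact jp_pos ht

lemma abs_sub_le_of_mem_uIcc {a b t : ℝ} (h : t ∈ Set.uIcc a b) : |t - a| ≤ |b - a| := by
  rcases le_total a b with hab | hab
  · rw [Set.uIcc_of_le hab] at h
    rw [abs_of_nonneg (by linarith [h.1]), abs_of_nonneg (by linarith)]
    linarith [h.2]
  · rw [Set.uIcc_of_ge hab] at h
    rw [abs_of_nonpos (by linarith [h.2]), abs_of_nonpos (by linarith)]
    linarith [h.1]

lemma mvt_bound {f f' : ℝ → ℝ} {w t C : ℝ}
    (hf : ∀ σ ∈ Set.uIcc w t, HasDerivAt f (f' σ) σ)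
    (hb : ∀ σ ∈ Set.uIcc w t, |f' σ| ≤ C) : |f t - f w| ≤ C * |t - w| := by
  have := (convex_uIcc w t).norm_image_sub_le_of_norm_hasDerivWithin_le
    (fun σ hσ => (hf σ hσ).hasDerivWithinAt) (fun σ hσ => by simpa using hb σ hσ)
    Set.left_mem_uIcc Set.right_mem_uIcc
  simpa [Real.norm_eq_abs] using this

lemma rpow_mem_bound {lo hi σ : ℝ} (q : ℝ) (h0 : 0 < lo) (h1 : lo ≤ σ) (h2 : σ ≤ hi) :
    σ ^ q ≤ lo ^ q + hi ^ q := by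
  rcases le_or_gt 0 q with hq | hq
  · have h3 : σ ^ q ≤ hi ^ q := Real.rpow_le_rpow (by linarith) h2 hq
    have h4 : (0:ℝ) ≤ lo ^ q := Real.rpow_nonneg h0.le q
    linarith
  · have h3 : σ ^ q ≤ lo ^ q := Real.rpow_le_rpow_of_nonpos h0 h1 hq.le
    have h4 : (0:ℝ) ≤ hi ^ q := Real.rpow_nonneg (by linarith) q
    linarith

lemma rpow_shift {y : ℝ} (hy : 0 < y) (q : ℝ) (n : ℕ) : y ^ q * y ^ n = y ^ (q + n) := by
  rw [← Real.rpow_natCast y n, ← Real.rpow_add hy]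

lemma iteratedDerivWithin_of_isOpen' {s : Set ℝ} {f : ℝ → ℝ} (n : ℕ) (hs : IsOpen s) {x : ℝ}
    (hx : x ∈ s) : iteratedDerivWithin n f s x = iteratedDeriv n f x := by
  simp only [iteratedDerivWithin, iteratedDeriv, iteratedFDerivWithin_of_isOpen n hs hx]

-- quad_bound, first for h ≥ 0
lemma quad_bound_nonneg {f f' : ℝ → ℝ} {C h : ℝ} (hC : 0 ≤ C) (hh : 0 ≤ h)
    (hf : ∀ t ∈ Set.uIcc 0 h, HasDerivAt f (f' t) t)
    (hf'c : ContinuousOn f' (Set.uIcc 0 h))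
    (hb : ∀ t ∈ Set.uIcc 0 h, |f' t| ≤ C * |t|) (h0 : f 0 = 0) :
    |f h| ≤ C / 2 * h ^ 2 := by
  have hint : IntervalIntegrable f' MeasureTheory.volume 0 h :=
    hf'c.intervalIntegrable
  have hftc : ∫ t in (0:ℝ)..h, f' t = f h - f 0 :=
    intervalIntegral.integral_eq_sub_of_hasDerivAt hf hint
  have hgint : IntervalIntegrable (fun t => C * t) MeasureTheory.volume 0 h :=
    (continuous_const.mul continuous_id).intervalIntegrable 0 h
  have hbound : ‖∫ t in (0:ℝ)..h, f' t‖ ≤ |∫ t in (0:ℝ)..h, C * t| := by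
    refine intervalIntegral.norm_integral_le_abs_of_norm_le ?_ hgint
    have : Set.uIoc (0:ℝ) h ⊆ Set.uIcc 0 h := Set.uIoc_subset_uIcc
    filter_upwards [MeasureTheory.ae_restrict_mem measurableSet_uIoc] with t ht
    have ht' := this ht
    have htpos : 0 ≤ t := by
      rcases Set.mem_uIoc.1 ht with h1 | h1
      · exact le_of_lt h1.1
      · exfalso; rcases h1 with ⟨h2, h3⟩; exact absurd (h2.trans_le h3) (by linarith)
    calc ‖f' t‖ = |f' t| := rfl
      _ ≤ C * |t| := hb t ht'
      _ = C * t := by rw [abs_of_nonneg htpos]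
  have hval : ∫ t in (0:ℝ)..h, C * t = C * (h ^ 2 / 2) := by
    rw [intervalIntegral.integral_const_mul, integral_id]
    ring
  rw [hftc] at hbound
  rw [h0, sub_zero] at hbound
  rw [hval] at hbound
  calc |f h| = ‖f h‖ := rfl
    _ ≤ |C * (h ^ 2 / 2)| := hbound
    _ = C / 2 * h ^ 2 := by rw [abs_of_nonneg (by positivity)]; ring

lemma quad_bound {f f' : ℝ → ℝ} {C h : ℝ} (hC : 0 ≤ C)
    (hf : ∀ t ∈ Set.uIcc 0 h, HasDerivAt f (f' t) t)
    (hf'c : ContinuousOn f' (Set.uIcc 0 h))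
    (hb : ∀ t ∈ Set.uIcc 0 h, |f' t| ≤ C * |t|) (h0 : f 0 = 0) :
    |f h| ≤ C / 2 * h ^ 2 := by
  rcases le_or_gt 0 h with hh | hh
  · exact quad_bound_nonneg hC hh hf hf'c hb h0
  · -- reflect
    have hmem : ∀ t ∈ Set.uIcc (0:ℝ) (-h), -t ∈ Set.uIcc (0:ℝ) h := by
      intro t ht
      rw [Set.uIcc_of_le (by linarith)] at ht
      rw [Set.uIcc_of_ge (by linarith)]
      exact ⟨by linarith [ht.2], by linarith [ht.1]⟩
    have key : |(fun t => f (-t)) (-h)| ≤ C / 2 * (-h) ^ 2 := by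
      refine quad_bound_nonneg (f := fun t => f (-t)) (f' := fun t => -f' (-t)) (h := -h)
        hC (by linarith) ?_ ?_ ?_ ?_
      · intro t ht
        have := (hf (-t) (hmem t ht)).comp t (hasDerivAt_neg t)
        simpa [Function.comp_def] using this
      · refine (hf'c.comp (continuous_neg.continuousOn) ?_).neg
        intro t ht; exact hmem t ht
      · intro t ht
        rw [abs_neg]
        calc |f' (-t)| ≤ C * |-t| := hb (-t) (hmem t ht)
          _ = C * |t| := by rw [abs_neg]
      · simpa using h0
    simpa using key

lemma jp_continuous {p : ℝ} (hp : 1 < p) : Continuous (Jp p) := by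
  rw [continuous_iff_continuousAt]
  intro t
  rcases eq_or_ne t 0 with rfl | ht
  · have hb : ∀ s : ℝ, ‖Jp p s‖ ≤ |s| ^ (p - 1) := by
      intro s
      rcases eq_or_ne s 0 with rfl | hs
      · simp [Jp, Real.zero_rpow (by linarith : p - 1 ≠ 0)]
      · rw [Real.norm_eq_abs, Jp, abs_mul, abs_of_nonneg (Real.rpow_nonneg (abs_nonneg s) _),
          show p - 1 = p - 2 + 1 by ring, Real.rpow_add_one (abs_ne_zero.2 hs)]
    have h1 : Filter.Tendsto (fun s : ℝ => |s| ^ (p - 1)) (nhds 0) (nhds 0) := by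
      have h2 : Filter.Tendsto (fun s : ℝ => |s|) (nhds 0) (nhds (0:ℝ)) := by
        simpa using continuous_abs.tendsto (0:ℝ)
      have h3 := h2.rpow_const (p := p - 1) (Or.inr (by linarith))
      simpa [Real.zero_rpow (by linarith : p - 1 ≠ 0)] using h3
    have : Filter.Tendsto (Jp p) (nhds 0) (nhds 0) := squeeze_zero_norm hb h1
    simpa [ContinuousAt, Jp] using this
  · have h1 : ContinuousAt (fun s : ℝ => |s| ^ (p - 2)) t :=
      (continuous_abs.continuousAt).rpow_const (Or.inl (abs_ne_zero.2 ht))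
    exact h1.mul continuousAt_id

lemma jp_taylor2_pos {p : ℝ} (hp : 1 < p) {w t : ℝ} (hw : 0 < w) (ht : |t - w| ≤ w / 2) :
    |Jp p t - Jp p w - (p-1) * w ^ (p-2) * (t-w) - (p-1) * (p-2) / 2 * w ^ (p-3) * (t-w)^2|
      ≤ (p-1) * (|p-2|+2) * (|p-3|+2) * ((w/2) ^ (p-4) + (2*w) ^ (p-4)) * |t-w|^3 := by
  set β : ℝ := (w/2) ^ (p-4) + (2*w) ^ (p-4) with hβdef
  set Cb : ℝ := (p-1) * (|p-2|+2) * (|p-3|+2) * β with hCbdef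
  have hβ0 : 0 ≤ β := add_nonneg (Real.rpow_nonneg (by linarith) _) (Real.rpow_nonneg (by linarith) _)
  have hCb0 : 0 ≤ Cb := by
    have h1 : (0:ℝ) ≤ |p-2| + 2 := by positivity
    have h2 : (0:ℝ) ≤ |p-3| + 2 := by positivity
    have h3 : (0:ℝ) ≤ p - 1 := by linarith
    rw [hCbdef]; positivity
  have hβb : ∀ σ : ℝ, |σ - w| ≤ w / 2 → σ ^ (p-4) ≤ β := by
    intro σ hσ
    have h1 := abs_le.1 hσ
    exact rpow_mem_bound (p-4) (by linarith : (0:ℝ) < w/2) (by linarith) (by linarith)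
  have hpos : ∀ σ : ℝ, |σ - w| ≤ w / 2 → 0 < σ := by
    intro σ hσ; have := (abs_le.1 hσ).1; linarith
  -- Step A
  have hq2 : ∀ t' : ℝ, |t' - w| ≤ w / 2 →
      |(p-1)*(p-2)*t' ^ (p-3) - (p-1)*(p-2)*w ^ (p-3)| ≤ Cb * |t' - w| := by
    intro t' ht'
    refine mvt_bound (f := fun σ => (p-1)*(p-2)*σ ^ (p-3)) (w := w) (t := t')
      (f' := fun σ => (p-1)*(p-2)*((p-3) * σ ^ (p-4))) ?_ ?_
    · intro σ hσ
      have hσ' : |σ - w| ≤ w / 2 := le_trans (abs_sub_le_of_mem_uIcc hσ) ht'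
      exact (hasDerivAt_rpow'' (p-3) (p-4) (by ring) (hpos σ hσ')).const_mul ((p-1)*(p-2))
    · intro σ hσ
      have hσ' : |σ - w| ≤ w / 2 := le_trans (abs_sub_le_of_mem_uIcc hσ) ht'
      have hb1 : σ ^ (p-4) ≤ β := hβb σ hσ'
      have hb0 : (0:ℝ) ≤ σ ^ (p-4) := Real.rpow_nonneg (hpos σ hσ').le _
      calc |(p-1)*(p-2)*((p-3) * σ ^ (p-4))|
          = (p-1) * |p-2| * |p-3| * σ ^ (p-4) := by
            rw [abs_mul, abs_mul, abs_mul, abs_of_nonneg (by linarith : (0:ℝ) ≤ p-1),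
              abs_of_nonneg hb0]
            ring
        _ ≤ (p-1) * (|p-2|+2) * (|p-3|+2) * β := by
            have h3 : (0:ℝ) ≤ p - 1 := by linarith
            have hA : (p-1) * |p-2| * |p-3| ≤ (p-1) * (|p-2|+2) * (|p-3|+2) := by
              nlinarith [abs_nonneg (p-2), abs_nonneg (p-3)]
            have hA0 : (0:ℝ) ≤ (p-1) * |p-2| * |p-3| := by positivity
            exact mul_le_mul hA hb1 hb0 (le_trans hA0 hA)
        _ = Cb := hCbdef.symm
  -- Step B
  have hq1 : ∀ t' : ℝ, |t' - w| ≤ w / 2 →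
      |(p-1)*t' ^ (p-2) - (p-1)*w ^ (p-2) - (p-1)*(p-2)*w ^ (p-3)*(t'-w)| ≤ Cb * |t' - w|^2 := by
    intro t' ht'
    have key := mvt_bound (w := w) (t := t')
      (f := fun σ => (p-1)*σ ^ (p-2) - (p-1)*w ^ (p-2) - (p-1)*(p-2)*w ^ (p-3)*(σ-w))
      (f' := fun σ => (p-1)*(p-2)*σ ^ (p-3) - (p-1)*(p-2)*w ^ (p-3))
      (C := Cb * |t' - w|) ?_ ?_
    · have : ((p-1)*t' ^ (p-2) - (p-1)*w ^ (p-2) - (p-1)*(p-2)*w ^ (p-3)*(t'-w)) -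
          ((p-1)*w ^ (p-2) - (p-1)*w ^ (p-2) - (p-1)*(p-2)*w ^ (p-3)*(w-w)) =
          (p-1)*t' ^ (p-2) - (p-1)*w ^ (p-2) - (p-1)*(p-2)*w ^ (p-3)*(t'-w) := by ring
      rw [this] at key
      calc _ ≤ Cb * |t' - w| * |t' - w| := key
        _ = Cb * |t' - w|^2 := by ring
    · intro σ hσ
      have hσ' : |σ - w| ≤ w / 2 := le_trans (abs_sub_le_of_mem_uIcc hσ) ht'
      have h1 := (hasDerivAt_rpow'' (p-2) (p-3) (by ring) (hpos σ hσ')).const_mul (p-1)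
      have h2 : HasDerivAt (fun σ : ℝ => (p-1)*(p-2)*w ^ (p-3)*(σ-w))
          ((p-1)*(p-2)*w ^ (p-3)) σ := by
        simpa using ((hasDerivAt_id σ).sub_const w).const_mul ((p-1)*(p-2)*w ^ (p-3))
      have := (h1.sub_const ((p-1)*w ^ (p-2))).sub h2
      exact this.congr_deriv (by ring)
    · intro σ hσ
      have hσ' : |σ - w| ≤ w / 2 := le_trans (abs_sub_le_of_mem_uIcc hσ) ht'
      calc |(p-1)*(p-2)*σ ^ (p-3) - (p-1)*(p-2)*w ^ (p-3)| ≤ Cb * |σ - w| := hq2 σ hσ'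
        _ ≤ Cb * |t' - w| := by
            exact mul_le_mul_of_nonneg_left (abs_sub_le_of_mem_uIcc hσ) hCb0
  -- Step C
  have key := mvt_bound (w := w) (t := t)
    (f := fun σ => Jp p σ - Jp p w - (p-1)*w ^ (p-2)*(σ-w) - (p-1)*(p-2)/2*w ^ (p-3)*(σ-w)^2)
    (f' := fun σ => (p-1)*σ ^ (p-2) - (p-1)*w ^ (p-2) - (p-1)*(p-2)*w ^ (p-3)*(σ-w))
    (C := Cb * |t - w|^2) ?_ ?_
  · have h0 : (Jp p w - Jp p w - (p-1)*w ^ (p-2)*(w-w) - (p-1)*(p-2)/2*w ^ (p-3)*(w-w)^2) = 0 := by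
      ring
    rw [h0, sub_zero] at key
    calc |Jp p t - Jp p w - (p-1)*w ^ (p-2)*(t-w) - (p-1)*(p-2)/2*w ^ (p-3)*(t-w)^2|
        ≤ Cb * |t - w|^2 * |t - w| := key
      _ = Cb * |t - w|^3 := by ring
  · intro σ hσ
    have hσ' : |σ - w| ≤ w / 2 := le_trans (abs_sub_le_of_mem_uIcc hσ) ht
    have h1 := hasDerivAt_jp (p := p) (hpos σ hσ')
    have h2 : HasDerivAt (fun σ : ℝ => (p-1)*w ^ (p-2)*(σ-w)) ((p-1)*w ^ (p-2)) σ := by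
      simpa using ((hasDerivAt_id σ).sub_const w).const_mul ((p-1)*w ^ (p-2))
    have h3 : HasDerivAt (fun σ : ℝ => (p-1)*(p-2)/2*w ^ (p-3)*(σ-w)^2)
        ((p-1)*(p-2)/2*w ^ (p-3)*(2*(σ-w))) σ := by
      have hb := (((hasDerivAt_id σ).sub_const w).pow 2).const_mul ((p-1)*(p-2)/2*w ^ (p-3))
      exact hb.congr_deriv (by simp only [id_eq]; push_cast; ring)
    have := ((h1.sub_const (Jp p w)).sub h2).sub h3
    exact this.congr_deriv (by ring)
  · intro σ hσ
    have hσ' : |σ - w| ≤ w / 2 := le_trans (abs_sub_le_of_mem_uIcc hσ) ht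
    calc |(p-1)*σ ^ (p-2) - (p-1)*w ^ (p-2) - (p-1)*(p-2)*w ^ (p-3)*(σ-w)|
        ≤ Cb * |σ - w|^2 := hq1 σ hσ'
      _ ≤ Cb * |t - w|^2 := by
          have := abs_sub_le_of_mem_uIcc hσ
          have h2 : |σ - w|^2 ≤ |t - w|^2 := by
            exact pow_le_pow_left₀ (abs_nonneg _) this 2
          exact mul_le_mul_of_nonneg_left h2 hCb0

lemma jp_taylor2 {p : ℝ} (hp : 1 < p) {w t : ℝ} (hw : w ≠ 0) (ht : |t - w| ≤ |w| / 2) :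
    |Jp p t - Jp p w - (p-1) * |w| ^ (p-2) * (t-w) - (p-1) * (p-2) / 2 * (|w| ^ (p-4) * w) * (t-w)^2|
      ≤ (p-1) * (|p-2|+2) * (|p-3|+2) * ((|w|/2) ^ (p-4) + (2*|w|) ^ (p-4)) * |t-w|^3 := by
  rcases hw.lt_or_gt with hneg | hpos
  · -- w < 0 : reflect
    have habs : |w| = -w := abs_of_neg hneg
    have hw' : (0:ℝ) < -w := by linarith
    have ht' : |(-t) - (-w)| ≤ (-w) / 2 := by
      rw [show (-t) - (-w) = -(t - w) by ring, abs_neg]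
      rw [habs] at ht; exact ht
    have H := jp_taylor2_pos hp hw' ht'
    rw [show (-t) - (-w) = -(t - w) by ring] at H
    rw [jp_odd, jp_odd] at H
    have hww : (-w) ^ (p-4) * w = -((-w) ^ (p-3)) := by
      rw [show p - 3 = p - 4 + 1 by ring, Real.rpow_add_one hw'.ne']
      ring
    have hinner : -Jp p t - -Jp p w - (p-1) * (-w) ^ (p-2) * (-(t-w)) -
        (p-1)*(p-2)/2 * (-w) ^ (p-3) * (-(t-w))^2
        = -(Jp p t - Jp p w - (p-1) * (-w) ^ (p-2) * (t-w) -
            (p-1)*(p-2)/2 * ((-w) ^ (p-4) * w) * (t-w)^2) := by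
      rw [hww]; ring
    rw [hinner, abs_neg, abs_neg] at H
    rw [habs]
    exact H
  · -- w > 0
    have habs : |w| = w := abs_of_pos hpos
    rw [habs]
    have hww : w ^ (p-4) * w = w ^ (p-3) := by
      rw [show p - 3 = p - 4 + 1 by ring, Real.rpow_add_one hpos.ne']
    rw [hww]
    exact jp_taylor2_pos hp hpos (by rwa [habs] at ht)


set_option maxHeartbeats 4000000 in
/-- One-dimensional asymptotic expansion of the `p`-Laplacian with
quadratic error, away from critical points. -/
theorem statement4 (p : ℝ) (hp : 1 < p) (x₀ R : ℝ) (hR0 : 0 < R) (hR1 : R < 1)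
    (φ : ℝ → ℝ) (M : ℝ) (hφ : C4bOn1 φ (Set.Ioo (x₀ - R) (x₀ + R)) M)
    (hd1 : ∀ y ∈ Set.Icc (x₀ - R) (x₀ + R), deriv φ y ≠ 0) :
    ∃ C > 0, ∀ r : ℝ, 0 < r →
      r < min (derivInfOn φ (Set.Ioo (x₀ - R) (x₀ + R)) /
          deriv2SupOn φ (Set.Ioo (x₀ - R) (x₀ + R))) (R / 2) →
      ∀ x : ℝ, |x - x₀| < R / 2 →
        |Mr1D p r φ x - (p - 1) * |deriv φ x| ^ (p - 2) * deriv (deriv φ) x| ≤ C * r ^ 2 ∧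
        |Mr2D p r φ x - (p - 1) * |deriv φ x| ^ (p - 2) * deriv (deriv φ) x| ≤ C * r ^ 2 := by
  have hp1 : (0:ℝ) < p - 1 := by linarith
  set s : Set ℝ := Set.Ioo (x₀ - R) (x₀ + R) with hsdef
  have hsopen : IsOpen s := isOpen_Ioo
  have hx₀s : x₀ ∈ s := by rw [hsdef]; exact ⟨by linarith, by linarith⟩
  set ι := derivInfOn φ s with hιdef
  set K := deriv2SupOn φ s with hKdef
  have hK0 : 0 ≤ K := by
    rw [hKdef, deriv2SupOn]
    exact Real.sSup_nonneg (by rintro b ⟨y, hy, rfl⟩; exact abs_nonneg _)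
  rcases le_or_gt ι 0 with hι | hι
  · -- trivial case : ι ≤ 0
    refine ⟨1, one_pos, fun r hr hrlt x _ => absurd hrlt (not_lt.2 ?_)⟩
    have h1 : ι / K ≤ 0 := div_nonpos_of_nonpos_of_nonneg hι hK0
    exact le_trans (le_trans (min_le_left _ _) h1) hr.le
  rcases eq_or_lt_of_le hK0 with hK | hK
  · -- trivial case : K = 0
    refine ⟨1, one_pos, fun r hr hrlt x _ => absurd hrlt (not_lt.2 ?_)⟩
    have h1 : ι / K = 0 := by rw [← hK, div_zero]
    exact le_trans (le_trans (min_le_left _ _) h1.le) hr.le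
  -- main case
  obtain ⟨hsm, hbdW⟩ := hφ
  have hbd : ∀ k : ℕ, k ≤ 4 → ∀ z ∈ s, |iteratedDeriv k φ z| ≤ M := fun k hk z hz => by
    rw [← iteratedDerivWithin_of_isOpen' k hsopen hz]; exact hbdW k hk z hz
  have hid2 : iteratedDeriv 2 φ = deriv (deriv φ) := by
    rw [show (2:ℕ) = 1 + 1 from rfl, iteratedDeriv_succ, iteratedDeriv_one]
  have hid3 : iteratedDeriv 3 φ = deriv (deriv (deriv φ)) := by
    rw [show (3:ℕ) = 2 + 1 from rfl, iteratedDeriv_succ, hid2]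
  have hid4 : iteratedDeriv 4 φ = deriv (deriv (deriv (deriv φ))) := by
    rw [show (4:ℕ) = 3 + 1 from rfl, iteratedDeriv_succ, hid3]
  have hM1 : ∀ z ∈ s, |deriv φ z| ≤ M := fun z hz => by
    rw [← iteratedDeriv_one]; exact hbd 1 (by norm_num) z hz
  have hM2 : ∀ z ∈ s, |deriv (deriv φ) z| ≤ M := fun z hz => by
    rw [← hid2]; exact hbd 2 (by norm_num) z hz
  have hM3 : ∀ z ∈ s, |deriv (deriv (deriv φ)) z| ≤ M := fun z hz => by
    rw [← hid3]; exact hbd 3 (by norm_num) z hz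
  have hM4 : ∀ z ∈ s, |deriv (deriv (deriv (deriv φ))) z| ≤ M := fun z hz => by
    rw [← hid4]; exact hbd 4 (by norm_num) z hz
  have hC3 : ContDiffOn ℝ 3 (deriv φ) s := hsm.deriv_of_isOpen hsopen (by norm_num)
  have hC2 : ContDiffOn ℝ 2 (deriv (deriv φ)) s := hC3.deriv_of_isOpen hsopen (by norm_num)
  have hC1 : ContDiffOn ℝ 1 (deriv (deriv (deriv φ))) s := hC2.deriv_of_isOpen hsopen (by norm_num)
  have hD0 : ∀ z ∈ s, HasDerivAt φ (deriv φ z) z := fun z hz =>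
    ((hsm.differentiableOn (by norm_num)).differentiableAt (hsopen.mem_nhds hz)).hasDerivAt
  have hD1 : ∀ z ∈ s, HasDerivAt (deriv φ) (deriv (deriv φ) z) z := fun z hz =>
    ((hC3.differentiableOn (by norm_num)).differentiableAt (hsopen.mem_nhds hz)).hasDerivAt
  have hD2 : ∀ z ∈ s, HasDerivAt (deriv (deriv φ)) (deriv (deriv (deriv φ)) z) z := fun z hz =>
    ((hC2.differentiableOn (by norm_num)).differentiableAt (hsopen.mem_nhds hz)).hasDerivAt
  have hD3 : ∀ z ∈ s, HasDerivAt (deriv (deriv (deriv φ)))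
      (deriv (deriv (deriv (deriv φ))) z) z := fun z hz =>
    ((hC1.differentiableOn (by norm_num)).differentiableAt (hsopen.mem_nhds hz)).hasDerivAt
  have hsne : s.Nonempty := ⟨x₀, hx₀s⟩
  have hsK : ∀ z ∈ s, |deriv (deriv φ) z| ≤ K := fun z hz =>
    le_csSup ⟨M, by rintro b ⟨y, hy, rfl⟩; exact hM2 y hy⟩ ⟨z, hz, rfl⟩
  have hKM : K ≤ M := csSup_le (hsne.image _) (by rintro b ⟨y, hy, rfl⟩; exact hM2 y hy)
  have hιx : ∀ z ∈ s, ι ≤ |deriv φ z| := fun z hz =>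
    csInf_le ⟨0, by rintro b ⟨y, hy, rfl⟩; exact abs_nonneg _⟩ ⟨z, hz, rfl⟩
  have hιM : ι ≤ M := le_trans (hιx x₀ hx₀s) (hM1 x₀ hx₀s)
  have hM : 0 < M := lt_of_lt_of_le hι hιM
  set Q1 : ℝ := ι ^ (p-2) + M ^ (p-2) with hQ1def
  set Q2 : ℝ := ι ^ (p-3) + M ^ (p-3) with hQ2def
  set Q3 : ℝ := ((ι/2) ^ (p-4) + (M/2) ^ (p-4)) + ((2*ι) ^ (p-4) + (2*M) ^ (p-4)) with hQ3def
  have hQ10 : 0 ≤ Q1 := add_nonneg (Real.rpow_nonneg hι.le _) (Real.rpow_nonneg hM.le _)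
  have hQ20 : 0 ≤ Q2 := add_nonneg (Real.rpow_nonneg hι.le _) (Real.rpow_nonneg hM.le _)
  have hQ30 : 0 ≤ Q3 := add_nonneg
    (add_nonneg (Real.rpow_nonneg (by linarith) _) (Real.rpow_nonneg (by linarith) _))
    (add_nonneg (Real.rpow_nonneg (by linarith) _) (Real.rpow_nonneg (by linarith) _))
  set C₁ : ℝ := (p-1) * (2*M*Q1 + (|p-2|+2) * (9*(M*M)) * Q2
      + (|p-2|+2) * (|p-3|+2) * (2*(M*M*M)) * Q3) with hC₁def
  have habs2 : (0:ℝ) ≤ |p-2| + 2 := by positivity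
  have habs3 : (0:ℝ) ≤ |p-3| + 2 := by positivity
  have hC₁0 : 0 ≤ C₁ := by
    refine mul_nonneg hp1.le (add_nonneg (add_nonneg ?_ ?_) ?_)
    · exact mul_nonneg (by linarith) hQ10
    · exact mul_nonneg (mul_nonneg habs2 (by nlinarith)) hQ20
    · exact mul_nonneg (mul_nonneg (mul_nonneg habs2 habs3) (by nlinarith)) hQ30
  refine ⟨(p+1) * C₁ + 1, by nlinarith, ?_⟩
  intro r hr0 hrlt x hx
  have hrR : r < R / 2 := lt_of_lt_of_le hrlt (min_le_right _ _)
  have hKr : K * r < ι := by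
    have h1 : r < ι / K := lt_of_lt_of_le hrlt (min_le_left _ _)
    have := (lt_div_iff₀ hK).1 h1
    linarith [this]
  have hxlt := abs_lt.1 hx
  have hxs : x ∈ s := by rw [hsdef]; exact ⟨by linarith [hxlt.1], by linarith [hxlt.2]⟩
  have hxIcc : x ∈ Set.Icc (x₀ - R) (x₀ + R) := ⟨by linarith [hxlt.1], by linarith [hxlt.2]⟩
  have ha0 : deriv φ x ≠ 0 := hd1 x hxIcc
  set a := deriv φ x with hadef
  set b := deriv (deriv φ) x with hbdef
  set c₃ := deriv (deriv (deriv φ)) x with hcdef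
  have haι : ι ≤ |a| := hιx x hxs
  have habs0 : 0 < |a| := lt_of_lt_of_le hι haι
  have haM : |a| ≤ M := hM1 x hxs
  have hbM : |b| ≤ M := hM2 x hxs
  have hcM : |c₃| ≤ M := hM3 x hxs
  have hmem : ∀ h : ℝ, |h| ≤ r → x + h ∈ s := by
    intro h hh
    have h2 := abs_le.1 hh
    rw [hsdef]
    exact ⟨by linarith [hxlt.1, h2.1], by linarith [hxlt.2, h2.2]⟩
  have hmem' : ∀ h : ℝ, |h| ≤ r → ∀ σ ∈ Set.uIcc 0 h, x + σ ∈ s := by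
    intro h hh σ hσ
    refine hmem σ (le_trans ?_ hh)
    simpa using abs_sub_le_of_mem_uIcc hσ
  have hsub : ∀ h : ℝ, |h| ≤ r → ∀ σ ∈ Set.uIcc 0 h, |σ| ≤ r := by
    intro h hh σ hσ
    refine le_trans ?_ hh
    simpa using abs_sub_le_of_mem_uIcc hσ
  -- Taylor chain
  have hd3b : ∀ h : ℝ, |h| ≤ r → |deriv (deriv (deriv φ)) (x + h) - c₃| ≤ M * |h| := by
    intro h hh
    have key := mvt_bound (w := 0) (t := h)
      (f := fun σ => deriv (deriv (deriv φ)) (x + σ))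
      (f' := fun σ => deriv (deriv (deriv (deriv φ))) (x + σ)) (C := M)
      (fun σ hσ => (hD3 (x+σ) (hmem' h hh σ hσ)).comp_const_add x σ)
      (fun σ hσ => hM4 (x+σ) (hmem' h hh σ hσ))
    simpa [hcdef] using key
  have hd2b : ∀ h : ℝ, |h| ≤ r → |deriv (deriv φ) (x + h) - b - c₃*h| ≤ M * |h|^2 := by
    intro h hh
    have key := mvt_bound (w := 0) (t := h)
      (f := fun σ => deriv (deriv φ) (x + σ) - b - c₃*σ)
      (f' := fun σ => deriv (deriv (deriv φ)) (x + σ) - c₃) (C := M * |h|)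
      (fun σ hσ => by
        have h1 := (hD2 (x+σ) (hmem' h hh σ hσ)).comp_const_add x σ
        have h2 : HasDerivAt (fun σ : ℝ => b + c₃*σ) c₃ σ := by
          simpa using ((hasDerivAt_id σ).const_mul c₃).const_add b
        simpa [sub_sub, Pi.sub_def] using h1.sub h2)
      (fun σ hσ => le_trans (hd3b σ (hsub h hh σ hσ))
        (mul_le_mul_of_nonneg_left (by simpa using abs_sub_le_of_mem_uIcc hσ) hM.le))
    have e : (deriv (deriv φ) (x + h) - b - c₃*h) -
        (deriv (deriv φ) (x + 0) - b - c₃*0) = deriv (deriv φ) (x + h) - b - c₃*h - 0 := by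
      rw [add_zero, ← hbdef]; ring
    rw [e, sub_zero] at key
    calc |deriv (deriv φ) (x + h) - b - c₃*h| ≤ M * |h| * |h - 0| := key
      _ = M * |h|^2 := by rw [sub_zero]; ring
  have hd1b : ∀ h : ℝ, |h| ≤ r → |deriv φ (x + h) - a - b*h - c₃*h^2/2| ≤ M * |h|^3 := by
    intro h hh
    have key := mvt_bound (w := 0) (t := h)
      (f := fun σ => deriv φ (x + σ) - a - b*σ - c₃*σ^2/2)
      (f' := fun σ => deriv (deriv φ) (x + σ) - b - c₃*σ) (C := M * |h|^2)
      (fun σ hσ => by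
        have h1 := (hD1 (x+σ) (hmem' h hh σ hσ)).comp_const_add x σ
        have h2 : HasDerivAt (fun σ : ℝ => a + b*σ + c₃*σ^2/2) (b + c₃*σ) σ := by
          have hb1 : HasDerivAt (fun σ : ℝ => a + b*σ) b σ := by
            simpa using ((hasDerivAt_id σ).const_mul b).const_add a
          have hb2 : HasDerivAt (fun σ : ℝ => c₃*σ^2/2) (c₃*σ) σ := by
            have := (((hasDerivAt_id σ).pow 2).const_mul c₃).div_const 2
            exact this.congr_deriv (by simp only [id_eq]; push_cast; ring)
          simpa [Pi.add_def] using hb1.add hb2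
        simpa [sub_sub, Pi.sub_def] using h1.sub h2)
      (fun σ hσ => by
        have h1 := hd2b σ (hsub h hh σ hσ)
        have h2 : |σ|^2 ≤ |h|^2 :=
          pow_le_pow_left₀ (abs_nonneg _) (by simpa using abs_sub_le_of_mem_uIcc hσ) 2
        calc |deriv (deriv φ) (x + σ) - b - c₃*σ| ≤ M * |σ|^2 := h1
          _ ≤ M * |h|^2 := mul_le_mul_of_nonneg_left h2 hM.le)
    have e : (deriv φ (x + h) - a - b*h - c₃*h^2/2) -
        (deriv φ (x + 0) - a - b*0 - c₃*0^2/2) = deriv φ (x + h) - a - b*h - c₃*h^2/2 - 0 := by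
      rw [add_zero, ← hadef]; ring
    rw [e, sub_zero] at key
    calc |deriv φ (x + h) - a - b*h - c₃*h^2/2| ≤ M * |h|^2 * |h - 0| := key
      _ = M * |h|^3 := by rw [sub_zero]; ring
  have hphib : ∀ h : ℝ, |h| ≤ r →
      |φ (x + h) - φ x - a*h - b*h^2/2 - c₃*h^3/6| ≤ M * |h|^4 := by
    intro h hh
    have key := mvt_bound (w := 0) (t := h)
      (f := fun σ => φ (x + σ) - φ x - a*σ - b*σ^2/2 - c₃*σ^3/6)
      (f' := fun σ => deriv φ (x + σ) - a - b*σ - c₃*σ^2/2) (C := M * |h|^3)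
      (fun σ hσ => by
        have h1 := (hD0 (x+σ) (hmem' h hh σ hσ)).comp_const_add x σ
        have h2 : HasDerivAt (fun σ : ℝ => φ x + a*σ + b*σ^2/2 + c₃*σ^3/6)
            (a + b*σ + c₃*σ^2/2) σ := by
          have hb1 : HasDerivAt (fun σ : ℝ => φ x + a*σ) a σ := by
            simpa using ((hasDerivAt_id σ).const_mul a).const_add (φ x)
          have hb2 : HasDerivAt (fun σ : ℝ => b*σ^2/2) (b*σ) σ := by
            have := (((hasDerivAt_id σ).pow 2).const_mul b).div_const 2
            exact this.congr_deriv (by simp only [id_eq]; push_cast; ring)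
          have hb3 : HasDerivAt (fun σ : ℝ => c₃*σ^3/6) (c₃*σ^2/2) σ := by
            have := (((hasDerivAt_id σ).pow 3).const_mul c₃).div_const 6
            exact this.congr_deriv (by simp only [id_eq]; push_cast; ring)
          simpa [Pi.add_def] using (hb1.add hb2).add hb3
        simpa [sub_sub, Pi.sub_def] using h1.sub h2)
      (fun σ hσ => by
        have h1 := hd1b σ (hsub h hh σ hσ)
        have h2 : |σ|^3 ≤ |h|^3 :=
          pow_le_pow_left₀ (abs_nonneg _) (by simpa using abs_sub_le_of_mem_uIcc hσ) 3
        calc |deriv φ (x + σ) - a - b*σ - c₃*σ^2/2| ≤ M * |σ|^3 := h1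
          _ ≤ M * |h|^3 := mul_le_mul_of_nonneg_left h2 hM.le)
    have e : (φ (x + h) - φ x - a*h - b*h^2/2 - c₃*h^3/6) -
        (φ (x + 0) - φ x - a*0 - b*0^2/2 - c₃*0^3/6)
        = φ (x + h) - φ x - a*h - b*h^2/2 - c₃*h^3/6 - 0 := by
      rw [add_zero]; ring
    rw [e, sub_zero] at key
    calc |φ (x + h) - φ x - a*h - b*h^2/2 - c₃*h^3/6| ≤ M * |h|^3 * |h - 0| := key
      _ = M * |h|^4 := by rw [sub_zero]; ring
  have hd1K : ∀ h : ℝ, |h| ≤ r → |deriv φ (x + h) - a| ≤ K * |h| := by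
    intro h hh
    have key := mvt_bound (w := 0) (t := h)
      (f := fun σ => deriv φ (x + σ))
      (f' := fun σ => deriv (deriv φ) (x + σ)) (C := K)
      (fun σ hσ => (hD1 (x+σ) (hmem' h hh σ hσ)).comp_const_add x σ)
      (fun σ hσ => hsK (x+σ) (hmem' h hh σ hσ))
    simpa [hadef] using key
  have hquadb : ∀ h : ℝ, |h| ≤ r → |φ (x + h) - φ x - a*h| ≤ K/2 * h^2 := by
    intro h hh
    refine quad_bound (f := fun σ => φ (x + σ) - φ x - a*σ)
      (f' := fun σ => deriv φ (x + σ) - a) hK0 ?_ ?_ ?_ (by simp)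
    · intro σ hσ
      have h1 := (hD0 (x+σ) (hmem' h hh σ hσ)).comp_const_add x σ
      have h2 : HasDerivAt (fun σ : ℝ => φ x + a*σ) a σ := by
        simpa using ((hasDerivAt_id σ).const_mul a).const_add (φ x)
      simpa [sub_sub, Pi.sub_def] using h1.sub h2
    · have hmaps : Set.MapsTo (fun σ : ℝ => x + σ) (Set.uIcc 0 h) s := fun σ hσ =>
        hmem' h hh σ hσ
      have hc : ContinuousOn (fun σ : ℝ => deriv φ (x + σ)) (Set.uIcc 0 h) :=
        (hC3.continuousOn).comp ((continuous_const.add continuous_id).continuousOn) hmaps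
      exact hc.sub continuousOn_const
    · intro σ hσ
      exact hd1K σ (hsub h hh σ hσ)
  -- core estimate
  have core : ∀ y : ℝ, 0 < y → y ≤ r →
      |Jp p (φ (x + y) - φ x) + Jp p (φ (x - y) - φ x) - (p-1) * |a| ^ (p-2) * b * y ^ p|
        ≤ C₁ * y ^ (p+2) := by
    intro y hy0 hyr
    have hy1 : y ≤ 1 := by linarith
    have hyabs : |y| = y := abs_of_pos hy0
    have hyabs' : |(-y : ℝ)| = y := by rw [abs_neg, hyabs]
    have hyr' : |(-y : ℝ)| ≤ r := by rw [hyabs']; exact hyr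
    have hyr'' : |y| ≤ r := by rw [hyabs]; exact hyr
    have hxmy : x + (-y) = x - y := by ring
    have hy20 : (0:ℝ) ≤ y^2 := pow_nonneg hy0.le 2
    have hy30 : (0:ℝ) ≤ y^3 := pow_nonneg hy0.le 3
    have hy42 : y^4 ≤ y^2 := pow_le_pow_of_le_one hy0.le hy1 (by norm_num)
    have hy43 : y^4 ≤ y^3 := pow_le_pow_of_le_one hy0.le hy1 (by norm_num)
    set u := φ (x + y) - φ x with hudef
    set v := φ (x - y) - φ x with hvdef
    set w := a * y with hwdef
    have hwne : w ≠ 0 := mul_ne_zero ha0 hy0.ne'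
    have hWabs : |w| = |a| * y := by rw [hwdef, abs_mul, hyabs]
    have hWne : |w| ≠ 0 := abs_ne_zero.2 hwne
    have hu4 : |u - (w + b*y^2/2 + c₃*y^3/6)| ≤ M * y^4 := by
      have h := hphib y hyr''
      rw [hyabs] at h
      have e : u - (w + b*y^2/2 + c₃*y^3/6)
          = φ (x + y) - φ x - a*y - b*y^2/2 - c₃*y^3/6 := by rw [hudef, hwdef]; ring
      rw [e]; exact h
    have hv4 : |v - (-w + b*y^2/2 - c₃*y^3/6)| ≤ M * y^4 := by
      have h := hphib (-y) hyr'
      rw [hyabs', hxmy] at h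
      have e : v - (-w + b*y^2/2 - c₃*y^3/6)
          = φ (x - y) - φ x - a*(-y) - b*(-y)^2/2 - c₃*(-y)^3/6 := by
        rw [hvdef, hwdef]; ring
      rw [e]; exact h
    have huw : |u - w| ≤ K/2 * y^2 := by
      have h := hquadb y hyr''
      have e : u - w = φ (x + y) - φ x - a*y := by rw [hudef, hwdef]
      rw [e]; exact h
    have hvw : |v + w| ≤ K/2 * y^2 := by
      have h := hquadb (-y) hyr'
      rw [hxmy] at h
      have e : v + w = φ (x - y) - φ x - a*(-y) := by rw [hvdef, hwdef]; ring
      rw [e]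
      calc |φ (x - y) - φ x - a*(-y)| ≤ K/2 * (-y)^2 := h
        _ = K/2 * y^2 := by ring
    have hKy : K/2 * y^2 ≤ |a| * y / 2 := by
      have h1 : K * y ≤ K * r := mul_le_mul_of_nonneg_left hyr hK0
      have h2 : K * y ≤ |a| := by linarith
      calc K/2 * y^2 = (K*y) * (y/2) := by ring
        _ ≤ |a| * (y/2) := mul_le_mul_of_nonneg_right h2 (by linarith)
        _ = |a| * y / 2 := by ring
    have htu : |u - w| ≤ |w| / 2 := by
      rw [hWabs]
      exact le_trans huw hKy
    have htv : |(-v) - w| ≤ |w| / 2 := by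
      have e : -v - w = -(v + w) := by ring
      rw [e, abs_neg, hWabs]
      exact le_trans hvw hKy
    have HU := jp_taylor2 hp hwne htu
    have HV := jp_taylor2 hp hwne htv
    set D1 : ℝ := (p-1) * |w| ^ (p-2) with hD1def
    set D2 : ℝ := (p-1) * (p-2) / 2 * (|w| ^ (p-4) * w) with hD2def
    set B3 : ℝ := (p-1) * (|p-2|+2) * (|p-3|+2) * ((|w|/2) ^ (p-4) + (2*|w|) ^ (p-4)) with hB3def
    set Eu : ℝ := Jp p u - Jp p w - D1*(u-w) - D2*(u-w)^2 with hEudef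
    set Ev : ℝ := Jp p (-v) - Jp p w - D1*(-v-w) - D2*(-v-w)^2 with hEvdef
    have hD1y : D1 * (b * y^2) = (p-1) * |a| ^ (p-2) * b * y ^ p := by
      rw [hD1def, hWabs, Real.mul_rpow (abs_nonneg a) hy0.le]
      have hsh : y ^ (p-2) * (y:ℝ) ^ (2:ℕ) = y ^ (p-2+(2:ℕ)) := rpow_shift hy0 (p-2) 2
      rw [show p - 2 + ((2:ℕ):ℝ) = p from by push_cast; ring] at hsh
      calc (p-1) * (|a| ^ (p-2) * y ^ (p-2)) * (b * y^2)
          = (p-1) * |a| ^ (p-2) * b * (y ^ (p-2) * y^2) := by ring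
        _ = (p-1) * |a| ^ (p-2) * b * y ^ p := by rw [hsh]
    have hsplit : Jp p u + Jp p v - (p-1) * |a| ^ (p-2) * b * y ^ p
        = D1*(u + v - b*y^2) + D2*(u+v)*(u - v - 2*w) + (Eu - Ev) := by
      have hodd : Jp p (-v) = - Jp p v := jp_odd p v
      rw [hEudef, hEvdef, hodd, ← hD1y]
      ring
    have hrpy : (0:ℝ) ≤ y ^ (p-2) := Real.rpow_nonneg hy0.le _
    have hrpy3 : (0:ℝ) ≤ y ^ (p-3) := Real.rpow_nonneg hy0.le _
    have hrpy4 : (0:ℝ) ≤ y ^ (p-4) := Real.rpow_nonneg hy0.le _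
    have hQa1 : |a| ^ (p-2) ≤ Q1 := rpow_mem_bound (p-2) hι haι haM
    have hQa2 : |a| ^ (p-3) ≤ Q2 := rpow_mem_bound (p-3) hι haι haM
    have hD1abs : |D1| ≤ (p-1) * Q1 * y ^ (p-2) := by
      rw [hD1def, abs_of_nonneg (mul_nonneg hp1.le (Real.rpow_nonneg (abs_nonneg w) _)),
        hWabs, Real.mul_rpow (abs_nonneg a) hy0.le]
      calc (p-1) * (|a| ^ (p-2) * y ^ (p-2)) ≤ (p-1) * (Q1 * y ^ (p-2)) :=
          mul_le_mul_of_nonneg_left (mul_le_mul_of_nonneg_right hQa1 hrpy) hp1.le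
        _ = (p-1) * Q1 * y ^ (p-2) := by ring
    have hD2abs : |D2| ≤ (p-1) * (|p-2|+2) * Q2 * y ^ (p-3) := by
      have e1 : |w| ^ (p-4) * |w| = |w| ^ (p-3) := by
        rw [show p - 3 = p - 4 + 1 from by ring, Real.rpow_add_one hWne]
      have e2 : |D2| = (p-1) * |p-2| / 2 * |w| ^ (p-3) := by
        calc |D2| = |(p-1)*(p-2)/2| * (abs (|w| ^ (p-4)) * |w|) := by
              rw [hD2def, abs_mul, abs_mul]
          _ = (p-1) * |p-2| / 2 * (|w| ^ (p-4) * |w|) := by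
              rw [abs_of_nonneg (Real.rpow_nonneg (abs_nonneg w) _), abs_div, abs_mul,
                abs_of_nonneg hp1.le, abs_two]
          _ = (p-1) * |p-2| / 2 * |w| ^ (p-3) := by rw [e1]
      rw [e2, hWabs, Real.mul_rpow (abs_nonneg a) hy0.le]
      have hAB : |a| ^ (p-3) * y ^ (p-3) ≤ Q2 * y ^ (p-3) :=
        mul_le_mul_of_nonneg_right hQa2 hrpy3
      have hA0 : 0 ≤ |a| ^ (p-3) * y ^ (p-3) :=
        mul_nonneg (Real.rpow_nonneg (abs_nonneg a) _) hrpy3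
      have hcoef : (p-1)*|p-2|/2 ≤ (p-1)*(|p-2|+2) := by
        have h := abs_nonneg (p-2)
        calc (p-1)*|p-2|/2 = (p-1)*(|p-2|/2) := by ring
          _ ≤ (p-1)*(|p-2|+2) := mul_le_mul_of_nonneg_left (by linarith) hp1.le
      have hcoef0 : 0 ≤ (p-1)*|p-2|/2 :=
        div_nonneg (mul_nonneg hp1.le (abs_nonneg _)) (by norm_num)
      calc (p-1) * |p-2| / 2 * (|a| ^ (p-3) * y ^ (p-3))
          ≤ (p-1)*(|p-2|+2) * (Q2 * y ^ (p-3)) :=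
            mul_le_mul hcoef hAB hA0 (le_trans hcoef0 hcoef)
        _ = (p-1)*(|p-2|+2) * Q2 * y ^ (p-3) := by ring
    have hUV : |u + v - b*y^2| ≤ 2*M*y^4 := by
      have e : u + v - b*y^2 = (u - (w + b*y^2/2 + c₃*y^3/6))
          + (v - (-w + b*y^2/2 - c₃*y^3/6)) := by ring
      rw [e]
      refine le_trans (abs_add_le _ _) ?_
      linarith [hu4, hv4]
    have hUV2 : |u + v| ≤ 3*M*y^2 := by
      have e : u + v = (u + v - b*y^2) + b*y^2 := by ring
      rw [e]
      refine le_trans (abs_add_le _ _) ?_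
      have h1 : |b*y^2| ≤ M*y^2 := by
        rw [abs_mul, abs_of_nonneg hy20]
        exact mul_le_mul_of_nonneg_right hbM hy20
      have h2 : M*y^4 ≤ M*y^2 := mul_le_mul_of_nonneg_left hy42 hM.le
      linarith [hUV]
    have hUVW : |u - v - 2*w| ≤ 3*M*y^3 := by
      have e : u - v - 2*w = (u - (w + b*y^2/2 + c₃*y^3/6))
          + (-(v - (-w + b*y^2/2 - c₃*y^3/6))) + c₃*y^3/3 := by ring
      rw [e]
      refine le_trans (abs_add_le _ _) ?_
      refine le_trans (add_le_add_left (abs_add_le _ _) _) ?_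
      rw [abs_neg]
      have h3 : |c₃*y^3/3| ≤ M*y^3/3 := by
        rw [abs_div, abs_mul, abs_of_nonneg hy30, show |(3:ℝ)| = 3 from by norm_num]
        have := mul_le_mul_of_nonneg_right hcM hy30
        linarith
      have h44 : M*y^4 ≤ M*y^3 := mul_le_mul_of_nonneg_left hy43 hM.le
      linarith [hu4, hv4, mul_nonneg hM.le hy30]
    have hB3b : B3 ≤ (p-1) * (|p-2|+2) * (|p-3|+2) * Q3 * y ^ (p-4) := by
      rw [hB3def]
      have e1 : (|w|/2) ^ (p-4) = (|a|/2) ^ (p-4) * y ^ (p-4) := by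
        rw [hWabs, show |a| * y / 2 = (|a|/2) * y from by ring,
          Real.mul_rpow (by positivity) hy0.le]
      have e2 : (2*|w|) ^ (p-4) = (2*|a|) ^ (p-4) * y ^ (p-4) := by
        rw [hWabs, show 2 * (|a| * y) = (2*|a|) * y from by ring,
          Real.mul_rpow (by positivity) hy0.le]
      rw [e1, e2]
      have b1 : (|a|/2) ^ (p-4) ≤ (ι/2) ^ (p-4) + (M/2) ^ (p-4) :=
        rpow_mem_bound (p-4) (by linarith) (by linarith) (by linarith)
      have b2 : (2*|a|) ^ (p-4) ≤ (2*ι) ^ (p-4) + (2*M) ^ (p-4) :=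
        rpow_mem_bound (p-4) (by linarith) (by linarith) (by linarith)
      have hcoef0 : 0 ≤ (p-1) * (|p-2|+2) * (|p-3|+2) :=
        mul_nonneg (mul_nonneg hp1.le habs2) habs3
      have hsum : (|a|/2) ^ (p-4) * y^(p-4) + (2*|a|) ^ (p-4) * y^(p-4) ≤ Q3 * y^(p-4) := by
        have m1 := mul_le_mul_of_nonneg_right b1 hrpy4
        have m2 := mul_le_mul_of_nonneg_right b2 hrpy4
        have e : Q3 * y^(p-4) = ((ι/2) ^ (p-4) + (M/2) ^ (p-4)) * y^(p-4)
            + ((2*ι) ^ (p-4) + (2*M) ^ (p-4)) * y^(p-4) := by rw [hQ3def]; ring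
        rw [e]
        linarith
      calc (p-1)*(|p-2|+2)*(|p-3|+2) * ((|a|/2) ^ (p-4) * y^(p-4) + (2*|a|) ^ (p-4) * y^(p-4))
          ≤ (p-1)*(|p-2|+2)*(|p-3|+2) * (Q3 * y^(p-4)) := mul_le_mul_of_nonneg_left hsum hcoef0
        _ = (p-1)*(|p-2|+2)*(|p-3|+2) * Q3 * y^(p-4) := by ring
    have htri : |Jp p u + Jp p v - (p-1) * |a| ^ (p-2) * b * y ^ p|
        ≤ |D1| * |u + v - b*y^2| + |D2| * |u+v| * |u - v - 2*w| + (|Eu| + |Ev|) := by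
      rw [hsplit]
      have t1 : |D1 * (u + v - b*y^2)| = |D1| * |u + v - b*y^2| := abs_mul _ _
      have t2 : |D2 * (u+v) * (u - v - 2*w)| = |D2| * |u+v| * |u - v - 2*w| := by
        rw [abs_mul, abs_mul]
      have t3 : |Eu - Ev| ≤ |Eu| + |Ev| := abs_sub _ _
      calc |D1*(u + v - b*y^2) + D2*(u+v)*(u - v - 2*w) + (Eu - Ev)|
          ≤ |D1*(u + v - b*y^2) + D2*(u+v)*(u - v - 2*w)| + |Eu - Ev| := abs_add_le _ _
        _ ≤ (|D1*(u + v - b*y^2)| + |D2*(u+v)*(u - v - 2*w)|) + (|Eu| + |Ev|) :=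
            add_le_add (abs_add_le _ _) t3
        _ = |D1| * |u + v - b*y^2| + |D2| * |u+v| * |u - v - 2*w| + (|Eu| + |Ev|) := by
            rw [t1, t2]
    have hb1 : |D1| * |u + v - b*y^2| ≤ (p-1) * (2*M*Q1) * y^(p+2) := by
      have h1 : |D1| * |u + v - b*y^2| ≤ ((p-1) * Q1 * y ^ (p-2)) * (2*M*y^4) :=
        mul_le_mul hD1abs hUV (abs_nonneg _) (mul_nonneg (mul_nonneg hp1.le hQ10) hrpy)
      have hsh : y ^ (p-2) * (y:ℝ) ^ (4:ℕ) = y ^ (p-2+(4:ℕ)) := rpow_shift hy0 (p-2) 4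
      rw [show p - 2 + ((4:ℕ):ℝ) = p + 2 from by push_cast; ring] at hsh
      calc |D1| * |u + v - b*y^2| ≤ ((p-1) * Q1 * y ^ (p-2)) * (2*M*y^4) := h1
        _ = (p-1) * (2*M*Q1) * (y ^ (p-2) * y^4) := by ring
        _ = (p-1) * (2*M*Q1) * y^(p+2) := by rw [hsh]
    have hb2 : |D2| * |u+v| * |u - v - 2*w| ≤ (p-1) * ((|p-2|+2) * (9*(M*M)) * Q2) * y^(p+2) := by
      have hn1 : 0 ≤ (p-1)*(|p-2|+2)*Q2*y^(p-3) :=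
        mul_nonneg (mul_nonneg (mul_nonneg hp1.le habs2) hQ20) hrpy3
      have h1 : |D2| * |u+v| ≤ ((p-1)*(|p-2|+2)*Q2*y^(p-3)) * (3*M*y^2) :=
        mul_le_mul hD2abs hUV2 (abs_nonneg _) hn1
      have hn2 : 0 ≤ ((p-1)*(|p-2|+2)*Q2*y^(p-3)) * (3*M*y^2) :=
        mul_nonneg hn1 (mul_nonneg (mul_nonneg (by norm_num) hM.le) hy20)
      have h2 : |D2| * |u+v| * |u - v - 2*w|
          ≤ (((p-1)*(|p-2|+2)*Q2*y^(p-3)) * (3*M*y^2)) * (3*M*y^3) :=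
        mul_le_mul h1 hUVW (abs_nonneg _) hn2
      have hsh : y ^ (p-3) * (y:ℝ) ^ (5:ℕ) = y ^ (p-3+(5:ℕ)) := rpow_shift hy0 (p-3) 5
      rw [show p - 3 + ((5:ℕ):ℝ) = p + 2 from by push_cast; ring] at hsh
      calc |D2| * |u+v| * |u - v - 2*w|
          ≤ (((p-1)*(|p-2|+2)*Q2*y^(p-3)) * (3*M*y^2)) * (3*M*y^3) := h2
        _ = (p-1) * ((|p-2|+2) * (9*(M*M)) * Q2) * (y^(p-3) * y^5) := by ring
        _ = (p-1) * ((|p-2|+2) * (9*(M*M)) * Q2) * y^(p+2) := by rw [hsh]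
    have hKM2 : K/2 ≤ M := by linarith
    have hcu : |u - w| ≤ M*y^2 :=
      le_trans huw (mul_le_mul_of_nonneg_right hKM2 hy20)
    have hcv : |(-v) - w| ≤ M*y^2 := by
      rw [show -v - w = -(v+w) from by ring, abs_neg]
      exact le_trans hvw (mul_le_mul_of_nonneg_right hKM2 hy20)
    have hncoef : 0 ≤ (p-1)*(|p-2|+2)*(|p-3|+2)*Q3*y^(p-4) :=
      mul_nonneg (mul_nonneg (mul_nonneg (mul_nonneg hp1.le habs2) habs3) hQ30) hrpy4
    have hEub : |Eu| ≤ ((p-1)*(|p-2|+2)*(|p-3|+2)*Q3*y^(p-4)) * ((M*y^2)^3) := by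
      refine le_trans HU ?_
      exact mul_le_mul hB3b (pow_le_pow_left₀ (abs_nonneg _) hcu 3)
        (pow_nonneg (abs_nonneg _) 3) hncoef
    have hEvb : |Ev| ≤ ((p-1)*(|p-2|+2)*(|p-3|+2)*Q3*y^(p-4)) * ((M*y^2)^3) := by
      refine le_trans HV ?_
      exact mul_le_mul hB3b (pow_le_pow_left₀ (abs_nonneg _) hcv 3)
        (pow_nonneg (abs_nonneg _) 3) hncoef
    have hbE : |Eu| + |Ev| ≤ (p-1) * ((|p-2|+2)*(|p-3|+2)*(2*(M*M*M))*Q3) * y^(p+2) := by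
      have hsh : y ^ (p-4) * (y:ℝ) ^ (6:ℕ) = y ^ (p-4+(6:ℕ)) := rpow_shift hy0 (p-4) 6
      rw [show p - 4 + ((6:ℕ):ℝ) = p + 2 from by push_cast; ring] at hsh
      have e : ((p-1)*(|p-2|+2)*(|p-3|+2)*Q3*y^(p-4)) * ((M*y^2)^3)
          = (p-1) * ((|p-2|+2)*(|p-3|+2)*(M*M*M)*Q3) * y^(p+2) := by
        rw [← hsh]; ring
      rw [e] at hEub hEvb
      have e2 : (p-1) * ((|p-2|+2)*(|p-3|+2)*(2*(M*M*M))*Q3) * y^(p+2)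
          = 2 * ((p-1) * ((|p-2|+2)*(|p-3|+2)*(M*M*M)*Q3) * y^(p+2)) := by ring
      rw [e2]
      linarith
    have hC1e : C₁ * y^(p+2) = (p-1)*(2*M*Q1)*y^(p+2)
        + (p-1)*((|p-2|+2)*(9*(M*M))*Q2)*y^(p+2)
        + (p-1)*((|p-2|+2)*(|p-3|+2)*(2*(M*M*M))*Q3)*y^(p+2) := by
      rw [hC₁def]; ring
    rw [hC1e]
    exact le_trans htri (by linarith [hb1, hb2, hbE])

  have hrp : (0:ℝ) < r ^ p := Real.rpow_pos_of_pos hr0 p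
  have hsh2 : r ^ p * (r:ℝ) ^ (2:ℕ) = r ^ (p+(2:ℕ)) := rpow_shift hr0 p 2
  rw [show p + ((2:ℕ):ℝ) = p + 2 from by push_cast; ring] at hsh2
  have hcC : C₁ ≤ (p+1)*C₁+1 := by nlinarith [hC₁0]
  constructor
  · -- Mr1
    have hc := core r hr0 le_rfl
    have heq : Mr1D p r φ x - (p-1) * |a| ^ (p-2) * b
        = (Jp p (φ (x + r) - φ x) + Jp p (φ (x - r) - φ x)
            - (p-1) * |a| ^ (p-2) * b * r ^ p) / r ^ p := by
      unfold Mr1D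
      field_simp
    rw [heq, abs_div, abs_of_pos hrp, div_le_iff₀ hrp]
    calc |Jp p (φ (x + r) - φ x) + Jp p (φ (x - r) - φ x)
          - (p-1) * |a| ^ (p-2) * b * r ^ p|
        ≤ C₁ * r ^ (p+2) := hc
      _ = C₁ * (r ^ p * r ^ 2) := by rw [← hsh2]
      _ ≤ ((p+1)*C₁+1) * (r ^ p * r ^ 2) := by
          have hnn : (0:ℝ) ≤ r ^ p * r ^ 2 := mul_nonneg hrp.le (sq_nonneg r)
          exact mul_le_mul_of_nonneg_right hcC hnn
      _ = ((p+1)*C₁+1) * r ^ 2 * r ^ p := by ring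
  · -- Mr2
    have hrr : -r ≤ r := by linarith
    have hmapsTo : Set.MapsTo (fun z : ℝ => x + z) (Set.uIcc (-r) r) s := by
      intro z hz
      rw [Set.uIcc_of_le hrr] at hz
      exact hmem z (abs_le.2 ⟨hz.1, hz.2⟩)
    have hinner : ContinuousOn (fun z : ℝ => φ (x + z) - φ x) (Set.uIcc (-r) r) := by
      have h1 : ContinuousOn (fun z : ℝ => φ (x + z)) (Set.uIcc (-r) r) :=
        hsm.continuousOn.comp ((continuous_const.add continuous_id).continuousOn) hmapsTo
      exact h1.sub continuousOn_const
    have hgcont : ContinuousOn (fun z : ℝ => Jp p (φ (x + z) - φ x)) (Set.uIcc (-r) r) :=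
      (jp_continuous hp).comp_continuousOn hinner
    have hgi : IntervalIntegrable (fun z : ℝ => Jp p (φ (x + z) - φ x)) volume (-r) r :=
      hgcont.intervalIntegrable
    have hmem0 : (0:ℝ) ∈ Set.uIcc (-r) r := by
      rw [Set.uIcc_of_le hrr]; exact ⟨by linarith, by linarith⟩
    have hgi1 : IntervalIntegrable (fun z : ℝ => Jp p (φ (x + z) - φ x)) volume (-r) 0 :=
      hgi.mono_set (Set.uIcc_subset_uIcc Set.left_mem_uIcc hmem0)
    have hgi2 : IntervalIntegrable (fun z : ℝ => Jp p (φ (x + z) - φ x)) volume 0 r :=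
      hgi.mono_set (Set.uIcc_subset_uIcc hmem0 Set.right_mem_uIcc)
    have hmapsneg : Set.MapsTo (fun z : ℝ => -z) (Set.uIcc 0 r) (Set.uIcc (-r) r) := by
      intro z hz
      simp only [Set.uIcc_of_le hr0.le, Set.mem_Icc] at hz
      simp only [Set.uIcc_of_le hrr, Set.mem_Icc]
      exact ⟨by linarith [hz.2], by linarith [hz.1]⟩
    have hgcont2 : ContinuousOn (fun z : ℝ => Jp p (φ (x + -z) - φ x)) (Set.uIcc 0 r) := by
      have := hgcont.comp continuous_neg.continuousOn hmapsneg
      simpa [Function.comp_def] using this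
    have hgi2' : IntervalIntegrable (fun z : ℝ => Jp p (φ (x + -z) - φ x)) volume 0 r :=
      hgcont2.intervalIntegrable
    have hIoo : (∫ z in Set.Ioo (-r) r, Jp p (φ (x + z) - φ x))
        = ∫ z in (-r)..r, Jp p (φ (x + z) - φ x) := by
      rw [intervalIntegral.integral_of_le hrr, MeasureTheory.integral_Ioc_eq_integral_Ioo]
    have hsplitI : (∫ z in (-r)..r, Jp p (φ (x + z) - φ x))
        = (∫ z in (-r)..(0:ℝ), Jp p (φ (x + z) - φ x))
          + ∫ z in (0:ℝ)..r, Jp p (φ (x + z) - φ x) :=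
      (intervalIntegral.integral_add_adjacent_intervals hgi1 hgi2).symm
    have hrefl : (∫ z in (-r)..(0:ℝ), Jp p (φ (x + z) - φ x))
        = ∫ z in (0:ℝ)..r, Jp p (φ (x + -z) - φ x) := by
      have h := intervalIntegral.integral_comp_neg (a := (0:ℝ)) (b := r)
        (f := fun z => Jp p (φ (x + z) - φ x))
      rw [neg_zero] at h
      exact h.symm
    have hadd : (∫ z in (0:ℝ)..r, Jp p (φ (x + -z) - φ x))
          + ∫ z in (0:ℝ)..r, Jp p (φ (x + z) - φ x)
        = ∫ z in (0:ℝ)..r, (Jp p (φ (x + z) - φ x) + Jp p (φ (x + -z) - φ x)) := by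
      rw [intervalIntegral.integral_add hgi2 hgi2']
      ring
    set T : ℝ := (p-1) * |a| ^ (p-2) * b with hTdef
    have hTpint : IntervalIntegrable (fun z : ℝ => T * z ^ p) volume 0 r :=
      (intervalIntegral.intervalIntegrable_rpow' (by linarith : (-1:ℝ) < p)).const_mul T
    have hTeval : ∫ z in (0:ℝ)..r, T * z ^ p = T * r ^ (p+1) / (p+1) := by
      rw [intervalIntegral.integral_const_mul,
        integral_rpow (Or.inl (by linarith : (-1:ℝ) < p)),
        Real.zero_rpow (by linarith : p + 1 ≠ 0)]
      ring
    have hFint : IntervalIntegrable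
        (fun z : ℝ => Jp p (φ (x + z) - φ x) + Jp p (φ (x + -z) - φ x)) volume 0 r :=
      hgi2.add hgi2'
    have hdiff : (∫ z in (0:ℝ)..r, (Jp p (φ (x + z) - φ x) + Jp p (φ (x + -z) - φ x)))
          - T * r ^ (p+1) / (p+1)
        = ∫ z in (0:ℝ)..r,
            ((Jp p (φ (x + z) - φ x) + Jp p (φ (x + -z) - φ x)) - T * z ^ p) := by
      rw [intervalIntegral.integral_sub hFint hTpint, hTeval]
    have hpb : ∀ z ∈ Set.uIoc (0:ℝ) r,
        ‖(Jp p (φ (x + z) - φ x) + Jp p (φ (x + -z) - φ x)) - T * z ^ p‖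
          ≤ C₁ * r ^ (p+2) := by
      intro z hz
      have hz' : z ∈ Set.Ioc (0:ℝ) r := by rwa [Set.uIoc_of_le hr0.le] at hz
      have hcore := core z hz'.1 hz'.2
      rw [Real.norm_eq_abs]
      have e : (Jp p (φ (x + z) - φ x) + Jp p (φ (x + -z) - φ x)) - T * z ^ p
          = Jp p (φ (x + z) - φ x) + Jp p (φ (x - z) - φ x)
            - (p-1) * |a| ^ (p-2) * b * z ^ p := by
        rw [hTdef, show x + -z = x - z from by ring]
      rw [e]
      calc |Jp p (φ (x + z) - φ x) + Jp p (φ (x - z) - φ x)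
            - (p-1) * |a| ^ (p-2) * b * z ^ p|
          ≤ C₁ * z ^ (p+2) := hcore
        _ ≤ C₁ * r ^ (p+2) :=
          mul_le_mul_of_nonneg_left (Real.rpow_le_rpow hz'.1.le hz'.2 (by linarith)) hC₁0
    have hbnd : |∫ z in (0:ℝ)..r,
          ((Jp p (φ (x + z) - φ x) + Jp p (φ (x + -z) - φ x)) - T * z ^ p)|
        ≤ C₁ * r ^ (p+2) * r := by
      have key := intervalIntegral.norm_integral_le_of_norm_le_const hpb
      rw [Real.norm_eq_abs] at key
      calc |∫ z in (0:ℝ)..r,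
            ((Jp p (φ (x + z) - φ x) + Jp p (φ (x + -z) - φ x)) - T * z ^ p)|
          ≤ C₁ * r ^ (p+2) * |r - 0| := key
        _ = C₁ * r ^ (p+2) * r := by rw [sub_zero, abs_of_pos hr0]
    have hIval : (∫ z in Set.Ioo (-r) r, Jp p (φ (x + z) - φ x))
        = ∫ z in (0:ℝ)..r, (Jp p (φ (x + z) - φ x) + Jp p (φ (x + -z) - φ x)) := by
      rw [hIoo, hsplitI, hrefl, hadd]
    have hp10 : (0:ℝ) < p + 1 := by linarith
    have hradd : r ^ (p+1) = r ^ p * r := Real.rpow_add_one hr0.ne' p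
    have hre : Mr2D p r φ x - T = (p+1) *
        ((∫ z in (0:ℝ)..r, (Jp p (φ (x + z) - φ x) + Jp p (φ (x + -z) - φ x)))
          - T * r ^ (p+1) / (p+1)) / (r ^ p * r) := by
      unfold Mr2D
      rw [hIval, hradd]
      field_simp
    rw [hre, abs_div, abs_mul, abs_of_pos hp10,
      abs_of_pos (mul_pos hrp hr0), div_le_iff₀ (mul_pos hrp hr0)]
    have hJb : |(∫ z in (0:ℝ)..r, (Jp p (φ (x + z) - φ x) + Jp p (φ (x + -z) - φ x)))
          - T * r ^ (p+1) / (p+1)| ≤ C₁ * r ^ (p+2) * r := by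
      rw [hdiff]; exact hbnd
    calc (p+1) * |(∫ z in (0:ℝ)..r, (Jp p (φ (x + z) - φ x) + Jp p (φ (x + -z) - φ x)))
          - T * r ^ (p+1) / (p+1)|
        ≤ (p+1) * (C₁ * r ^ (p+2) * r) := mul_le_mul_of_nonneg_left hJb hp10.le
      _ = ((p+1) * C₁) * (r ^ 2 * (r ^ p * r)) := by rw [← hsh2]; ring
      _ ≤ ((p+1)*C₁+1) * (r ^ 2 * (r ^ p * r)) := by
          have hnn : (0:ℝ) ≤ r ^ 2 * (r ^ p * r) :=
            mul_nonneg (sq_nonneg r) (mul_nonneg hrp.le hr0.le)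
          have h2 : (p+1) * C₁ ≤ (p+1)*C₁+1 := by linarith
          exact mul_le_mul_of_nonneg_right h2 hnn
      _ = ((p+1)*C₁+1) * r ^ 2 * (r ^ p * r) := by ring
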